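/- Let D be a rooted digraph with root o and let U ⊆ V(D) with o ∉ U. Let g be a self-embedding of D with g(U ∪ {o}) ⊆ U. Then g is not elliptic, i.e., g fixes no finite nonempty vertex set setwise. In particular, all iterates g^j(o) for j ≥ 1 lie in U and g has no periodic point at o. -/
import Mathlib


/-- There is a directed walk of length at most `n` from `x` to `y` along the edge relation `E`. -/
def StepsLe {V : Type*} (E : V → V → Prop) : ℕ → V → V → Prop
  | 0, x, y => x = y
  | n + 1, x, y => x = y ∨ ∃ z, E x z ∧ StepsLe E n z y

/-- The directed distance in the digraph with edge relation `E`, with value `⊤` if there is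
no directed path. -/
noncomputable def ddist {V : Type*} (E : V → V → Prop) (x y : V) : ℕ∞ :=
  sInf {m : ℕ∞ | ∃ n : ℕ, m = (n : ℕ∞) ∧ StepsLe E n x y}

lemma stepsLe_map {V : Type*} {E : V → V → Prop} {g : V → V}
    (hg_adj : ∀ x y, E x y ↔ E (g x) (g y)) :
    ∀ (n : ℕ) (x y : V), StepsLe E n x y → StepsLe E n (g x) (g y) := by
  intro n
  induction n with
  | zero => intro x y h; exact congrArg g h
  | succ n ih =>
    intro x y h
    rcases h with h | ⟨z, hz, hs⟩
    · exact Or.inl (congrArg g h)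
    · exact Or.inr ⟨g z, (hg_adj x z).1 hz, ih z y hs⟩

lemma ddist_map_le {V : Type*} {E : V → V → Prop} {g : V → V}
    (hg_adj : ∀ x y, E x y ↔ E (g x) (g y)) (x y : V) :
    ddist E (g x) (g y) ≤ ddist E x y := by
  apply sInf_le_sInf
  rintro m ⟨n, hm, hs⟩
  exact ⟨n, hm, stepsLe_map hg_adj n x y hs⟩

lemma ddist_iterate_le {V : Type*} {E : V → V → Prop} {g : V → V}
    (hg_adj : ∀ x y, E x y ↔ E (g x) (g y)) (m : ℕ) (x y : V) :
    ddist E (g^[m] x) (g^[m] y) ≤ ddist E x y := by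
  induction m with
  | zero => simp
  | succ m ih =>
    rw [Function.iterate_succ_apply', Function.iterate_succ_apply']
    exact le_trans (ddist_map_le hg_adj _ _) ih

/-- If a self-embedding of a rooted digraph (with finite balls) maps `U ∪ {o}` into `U`
where `o ∉ U`, then it is not elliptic; in particular all iterates of `o` lie in `U`
and `o` is not periodic. -/
theorem stmt6 {V : Type*} (E : V → V → Prop) (o : V)
    (hroot : ∀ v : V, ddist E o v ≠ ⊤)
    (hballs : ∀ (v : V) (n : ℕ),
      {w : V | ddist E v w ≤ (n : ℕ∞)}.Finite ∧ {w : V | ddist E w v ≤ (n : ℕ∞)}.Finite)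
    (U : Set V) (hoU : o ∉ U)
    (g : V → V) (hg_inj : Function.Injective g)
    (hg_adj : ∀ x y, E x y ↔ E (g x) (g y))
    (hmap : g '' (U ∪ {o}) ⊆ U) :
    (¬ ∃ F : Set V, F.Finite ∧ F.Nonempty ∧ g '' F = F) ∧
    (∀ j : ℕ, 1 ≤ j → g^[j] o ∈ U) ∧
    (∀ i : ℕ, 1 ≤ i → g^[i] o ≠ o) := by
  have hgo : g o ∈ U := hmap ⟨o, Or.inr rfl, rfl⟩
  have hU : ∀ u ∈ U, g u ∈ U := fun u hu => hmap ⟨u, Or.inl hu, rfl⟩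
  have hiter : ∀ j : ℕ, 1 ≤ j → g^[j] o ∈ U := by
    intro j hj
    induction j with
    | zero => omega
    | succ n ih =>
      rcases Nat.eq_or_lt_of_le hj with h | h
      · obtain rfl : n = 0 := by omega
        simpa using hgo
      · rw [Function.iterate_succ_apply']
        exact hU _ (ih (by omega))
  have hnoper : ∀ i : ℕ, 1 ≤ i → g^[i] o ≠ o := by
    intro i hi h
    exact hoU (h ▸ hiter i hi)
  refine ⟨?_, hiter, hnoper⟩
  rintro ⟨F, hFfin, ⟨f, hf⟩, hgF⟩
  have hFinv : ∀ x ∈ F, g x ∈ F := fun x hx => hgF ▸ ⟨x, hx, rfl⟩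
  have hforb : ∀ m : ℕ, g^[m] f ∈ F := by
    intro m
    induction m with
    | zero => simpa using hf
    | succ m ih => rw [Function.iterate_succ_apply']; exact hFinv _ ih
  -- f is periodic under g
  haveI := hFfin.to_subtype
  obtain ⟨a, b, hlt, heq'⟩ : ∃ a b : ℕ, a < b ∧ g^[a] f = g^[b] f := by
    obtain ⟨a, b, hab, heq⟩ :=
      Finite.exists_ne_map_eq_of_infinite (fun m : ℕ => (⟨g^[m] f, hforb m⟩ : F))
    have heq' : g^[a] f = g^[b] f := congrArg Subtype.val heq
    rcases hab.lt_or_gt with h | h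
    exacts [⟨a, b, h, heq'⟩, ⟨b, a, h, heq'.symm⟩]
  obtain ⟨k, hk, hbk⟩ : ∃ k, 1 ≤ k ∧ b = a + k := ⟨b - a, by omega, by omega⟩
  have hfk : g^[k] f = f := by
    have : g^[a] (g^[k] f) = g^[a] f := by
      rw [← Function.iterate_add_apply, ← hbk, ← heq']
    exact (hg_inj.iterate a) this
  have hfkm : ∀ m : ℕ, g^[k * m] f = f := by
    intro m
    induction m with
    | zero => simp
    | succ m ih =>
      rw [Nat.mul_succ, Nat.add_comm, Function.iterate_add_apply, ih, hfk]
  -- distance from o to f is finite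
  obtain ⟨n, hn⟩ := WithTop.ne_top_iff_exists.1 (hroot f)
  -- orbit of o under g^[k] stays in a finite ball
  have hball : ∀ m : ℕ, g^[k * m] o ∈ {w : V | ddist E w f ≤ (n : ℕ∞)} := by
    intro m
    have := ddist_iterate_le hg_adj (k * m) o f
    rw [hfkm m] at this
    exact le_trans this (le_of_eq hn.symm)
  haveI := (hballs f n).2.to_subtype
  obtain ⟨c, d, hlt2, heq2'⟩ : ∃ c d : ℕ, c < d ∧ g^[k * c] o = g^[k * d] o := by
    obtain ⟨c, d, hcd, heq2⟩ := Finite.exists_ne_map_eq_of_infinite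
      (fun m : ℕ => (⟨g^[k * m] o, hball m⟩ : {w : V | ddist E w f ≤ (n : ℕ∞)}))
    have heq2' : g^[k * c] o = g^[k * d] o := congrArg Subtype.val heq2
    rcases hcd.lt_or_gt with h | h
    exacts [⟨c, d, h, heq2'⟩, ⟨d, c, h, heq2'.symm⟩]
  have hper : g^[k * (d - c)] o = o := by
    apply hg_inj.iterate (k * c)
    rw [← Function.iterate_add_apply, ← Nat.mul_add]
    have : c + (d - c) = d := by omega
    rw [Nat.add_comm c (d - c)] at this ⊢
    rw [this, heq2']
  exact hnoper (k * (d - c)) (Nat.one_le_iff_ne_zero.2 (Nat.mul_ne_zero (by omega) (by omega))) hper
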